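/- Let b ≥ 1 be an integer, let g be a nonzero complex number, and let ω ∈ ℝ. Then A(ψ̂_g(ω)·g, exp(iω)) ≤ π/2^b. -/

import Mathlib

open scoped Real

/-- Internal angle between two complex numbers:
`A(x, y) = π − | |arg x − arg y| − π |`. -/
noncomputable def intAngle (x y : ℂ) : ℝ :=
  π - |(|Complex.arg x - Complex.arg y|) - π|

/-- The ω-beamformer phase
`ψ̂_g(ω) = exp(i·(2π/2^b)·round(−(2^b/(2π))·arg g + (2^b/(2π))·ω))`. -/
noncomputable def psiHat (b : ℕ) (g : ℂ) (ω : ℝ) : ℂ :=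
  Complex.exp (Complex.I * ((2 * π / 2 ^ b : ℝ) : ℂ) *
    ((round ((-(2 ^ b / (2 * π)) * Complex.arg g + (2 ^ b / (2 * π)) * ω : ℝ)) : ℤ) : ℂ))

/-!
Rounding to the nearest multiple of `2π / 2^b` makes `arg (ψ̂_g(ω) g)` agree with `ω` up to
`π / 2^b` modulo `2π`. The internal angle is the absolute value of the principal representative
(in `(-π, π]`) of `arg x - arg y`, and that never exceeds the absolute value of any other
representative.
-/

namespace Real.Angle

theorem abs_toReal_coe_le_abs (t : ℝ) : |(t : Angle).toReal| ≤ |t| := by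
  by_cases ht : |t| < π
  · obtain ⟨h₁, h₂⟩ := abs_lt.mp ht
    rw [toReal_coe_eq_self_iff.mpr ⟨h₁, h₂.le⟩]
  · exact (abs_toReal_le_pi _).trans (not_lt.mp ht)

theorem abs_toReal_coe_eq_pi_sub {d : ℝ} (hd : |d| ≤ 2 * π) :
    |(d : Angle).toReal| = π - |(|d| - π)| := by
  have hπ := Real.pi_pos
  rcases abs_le.mp hd with ⟨h₁, h₂⟩
  by_cases hlo : d ≤ -π
  · rw [toReal_coe_eq_self_add_two_pi_iff.mpr ⟨by linarith, hlo⟩, abs_of_neg (by linarith : d < 0),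
      abs_of_nonneg (by linarith : 0 ≤ d + 2 * π), abs_of_nonneg (by linarith : 0 ≤ -d - π)]
    ring
  by_cases hhi : π < d
  · rw [toReal_coe_eq_self_sub_two_pi_iff.mpr ⟨hhi, by linarith⟩, abs_of_pos (by linarith : 0 < d),
      abs_of_nonpos (by linarith : d - 2 * π ≤ 0), abs_of_pos (by linarith : 0 < d - π)]
    ring
  · have hd' : |d| ≤ π := abs_le.mpr ⟨by linarith, not_lt.mp hhi⟩
    rw [toReal_coe_eq_self_iff.mpr ⟨not_le.mp hlo, not_lt.mp hhi⟩,
      abs_of_nonpos (by linarith : |d| - π ≤ 0)]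
    ring

end Real.Angle

theorem Complex.arg_exp_I_mul_ofReal_coe_angle (t : ℝ) :
    (arg (exp (I * t)) : Real.Angle) = t := by
  rw [arg_exp, ← Real.Angle.toReal_coe, Real.Angle.coe_toReal]
  simp

theorem intAngle_eq_abs_toReal (x y : ℂ) :
    intAngle x y = |((Complex.arg x : Real.Angle) - Complex.arg y).toReal| := by
  rw [← Real.Angle.coe_sub, Real.Angle.abs_toReal_coe_eq_pi_sub, intAngle]
  calc |Complex.arg x - Complex.arg y| ≤ |Complex.arg x| + |Complex.arg y| := abs_sub _ _
    _ ≤ 2 * π := by linarith [Complex.abs_arg_le_pi x, Complex.abs_arg_le_pi y]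

theorem abs_mul_round_div_sub_le {s : ℝ} (hs : 0 < s) (y : ℝ) :
    |s * round (y / s) - y| ≤ s / 2 := by
  have h := abs_sub_round (y / s)
  calc |s * round (y / s) - y| = s * |y / s - round (y / s)| := by
        rw [abs_sub_comm, ← abs_of_pos hs, ← abs_mul, abs_of_pos hs, mul_sub,
          mul_div_cancel₀ _ hs.ne']
    _ ≤ s * (1 / 2) := by gcongr
    _ = s / 2 := by ring

theorem psiHat_eq_exp (b : ℕ) (g : ℂ) (ω : ℝ) :
    psiHat b g ω = Complex.exp (Complex.I *
      ((2 * π / 2 ^ b * round ((ω - Complex.arg g) / (2 * π / 2 ^ b)) : ℝ) : ℂ)) := by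
  have hx : -(2 ^ b / (2 * π)) * Complex.arg g + 2 ^ b / (2 * π) * ω =
      (ω - Complex.arg g) / (2 * π / 2 ^ b) := by
    field_simp
    ring
  rw [psiHat, hx]
  push_cast
  ring_nf

theorem stmt7_general {b : ℕ} (g : ℂ) (hg : g ≠ 0) (ω : ℝ) :
    intAngle (psiHat b g ω * g) (Complex.exp (Complex.I * (ω : ℂ))) ≤ π / 2 ^ b := by
  set s : ℝ := 2 * π / 2 ^ b
  have hs : 0 < s := by positivity
  set c : ℝ := s * round ((ω - Complex.arg g) / s)
  have hψ : psiHat b g ω = Complex.exp (Complex.I * c) := psiHat_eq_exp b g ω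
  have hangle : (Complex.arg (psiHat b g ω * g) : Real.Angle) -
      Complex.arg (Complex.exp (Complex.I * ω)) = ((c - (ω - Complex.arg g) : ℝ) : Real.Angle) := by
    rw [Complex.arg_mul_coe_angle (hψ ▸ Complex.exp_ne_zero _) hg, hψ,
      Complex.arg_exp_I_mul_ofReal_coe_angle, Complex.arg_exp_I_mul_ofReal_coe_angle, Real.Angle.coe_sub, Real.Angle.coe_sub]
    abel
  calc intAngle (psiHat b g ω * g) (Complex.exp (Complex.I * ω))
      ≤ |c - (ω - Complex.arg g)| := by
        rw [intAngle_eq_abs_toReal, hangle]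
        exact Real.Angle.abs_toReal_coe_le_abs _
    _ ≤ s / 2 := abs_mul_round_div_sub_le hs _
    _ = π / 2 ^ b := by ring

theorem stmt7 {b : ℕ} (hb : 1 ≤ b) (g : ℂ) (hg : g ≠ 0) (ω : ℝ) :
    intAngle (psiHat b g ω * g) (Complex.exp (Complex.I * (ω : ℂ))) ≤ π / 2 ^ b :=
  stmt7_general g hg ω
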